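/- arXiv:1505.06811 — 4 statements merged into one kernel-verified Lean document; each statement's English description precedes it below -/
import Mathlib

section
/- Let 0 < α, β, γ ≤ 1 and 0 < ε < 1/10 be real numbers satisfying αβ > 10ε(1 + log(1/γ)) and α > 10ε(1 + log(1/β)). Then (1-γ)^(1-ε) + (γ(1-β))^(1-ε) + (βγ(1-α))^(1-ε) ≤ 1 - αβγ/10 < 1. -/
set_option maxHeartbeats 1000000

open Real

lemma my_exp_le_one_add {t : ℝ} (h0 : 0 ≤ t) (h1 : t ≤ 1/6) :
    Real.exp t ≤ 1 + 1.2 * t := by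
  have h2 : -t + 1 ≤ Real.exp (-t) := Real.add_one_le_exp (-t)
  have h3 : Real.exp t * Real.exp (-t) = 1 := by rw [← Real.exp_add]; simp
  have h4 : (0:ℝ) < Real.exp t := Real.exp_pos t
  nlinarith [mul_le_mul_of_nonneg_left h2 h4.le]

lemma my_exp_sub_one {t : ℝ} (h0 : 0 ≤ t) :
    Real.exp t ≤ 1 + t * Real.exp t := by
  have h2 : -t + 1 ≤ Real.exp (-t) := Real.add_one_le_exp (-t)
  have h3 : Real.exp t * Real.exp (-t) = 1 := by rw [← Real.exp_add]; simp
  have h4 : (0:ℝ) < Real.exp t := Real.exp_pos t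
  nlinarith [mul_le_mul_of_nonneg_left h2 h4.le]

lemma my_u_exp_le {u : ℝ} (hu : 0 ≤ u) :
    u * Real.exp (-(9/10 * u)) ≤ 1 - Real.exp (-u) := by
  have e45 : 0.45 * u + 1 ≤ Real.exp (0.45 * u) := Real.add_one_le_exp _
  have e1 : 0.1 * u + 1 ≤ Real.exp (0.1 * u) := Real.add_one_le_exp _
  have p9 : Real.exp (-(9/10 * u)) * Real.exp (9/10 * u) = 1 := by
    rw [← Real.exp_add]; ring_nf; exact Real.exp_zero
  have pu : Real.exp (-u) * (Real.exp (9/10 * u) * Real.exp (0.1 * u)) = 1 := by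
    rw [← Real.exp_add, ← Real.exp_add]; ring_nf; exact Real.exp_zero
  have sq : Real.exp (9/10 * u) = Real.exp (0.45 * u) ^ 2 := by
    rw [← Real.exp_nat_mul]; congr 1; push_cast; ring
  have h45 : (0:ℝ) < Real.exp (0.45 * u) := Real.exp_pos _
  have h1 : (0:ℝ) < Real.exp (0.1 * u) := Real.exp_pos _
  have h9 : (0:ℝ) < Real.exp (9/10 * u) := Real.exp_pos _
  have hE9u : u ≤ Real.exp (9/10 * u) := by
    nlinarith [mul_le_mul e45 e45 (by linarith) h45.le, sq_nonneg (0.45*u - 1/9)]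
  have key : u * Real.exp (0.1*u) ≤ Real.exp (9/10*u) * Real.exp (0.1*u) - 1 := by
    have hb := mul_le_mul_of_nonneg_right e1 (by linarith : (0:ℝ) ≤ Real.exp (9/10*u) - u)
    nlinarith [mul_le_mul e45 e45 (by linarith) h45.le, sq_nonneg u, hu]
  refine le_of_mul_le_mul_right ?_ (mul_pos h9 h1)
  have e : u * Real.exp (-(9/10*u)) * (Real.exp (9/10*u) * Real.exp (0.1*u))
      = u * Real.exp (0.1*u) := by
    rw [show u * Real.exp (-(9/10*u)) * (Real.exp (9/10*u) * Real.exp (0.1*u))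
        = u * Real.exp (0.1*u) * (Real.exp (-(9/10*u)) * Real.exp (9/10*u)) by ring, p9, mul_one]
  have e2 : (1 - Real.exp (-u)) * (Real.exp (9/10*u) * Real.exp (0.1*u))
      = Real.exp (9/10*u) * Real.exp (0.1*u) - 1 := by
    rw [sub_mul, one_mul, pu]
  rw [e, e2]; exact key

lemma my_rpow_le {x ε : ℝ} (hx0 : 0 ≤ x) (hx1 : x ≤ 1) (hε0 : 0 ≤ ε) (hε1 : ε ≤ 1/10) :
    x ^ (1 - ε) ≤ x + ε * (1 - x) := by
  rcases eq_or_lt_of_le hx0 with h | h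
  · rw [← h, Real.zero_rpow (by intro hc; linarith)]
    nlinarith
  · obtain ⟨u, hu, hux⟩ : ∃ u : ℝ, 0 ≤ u ∧ x = Real.exp (-u) :=
      ⟨-Real.log x, by simpa using Real.log_nonpos hx0 hx1, by rw [neg_neg, Real.exp_log h]⟩
    subst hux
    rw [Real.rpow_def_of_pos h, Real.log_exp]
    have key : -u * (1 - ε) = -u + ε * u := by ring
    rw [key, Real.exp_add]
    have h1 : Real.exp (ε*u) ≤ 1 + (ε*u) * Real.exp (ε*u) := my_exp_sub_one (by positivity)
    have h2 : Real.exp (-u) * Real.exp (ε*u) ≤ Real.exp (-(9/10*u)) := by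
      rw [← Real.exp_add]
      apply Real.exp_le_exp.mpr
      nlinarith
    have h3 : u * Real.exp (-(9/10 * u)) ≤ 1 - Real.exp (-u) := my_u_exp_le hu
    have hex : (0:ℝ) < Real.exp (-u) := Real.exp_pos _
    have hee : (0:ℝ) < Real.exp (ε*u) := Real.exp_pos _
    have c1 : Real.exp (-u) * Real.exp (ε*u)
        ≤ Real.exp (-u) + (ε*u) * (Real.exp (-u) * Real.exp (ε*u)) := by
      nlinarith [mul_le_mul_of_nonneg_left h1 hex.le]
    have c2 : (ε*u) * (Real.exp (-u) * Real.exp (ε*u)) ≤ ε * (u * Real.exp (-(9/10*u))) := by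
      have := mul_le_mul_of_nonneg_left h2 (by positivity : (0:ℝ) ≤ ε*u)
      nlinarith
    have c3 : ε * (u * Real.exp (-(9/10*u))) ≤ ε * (1 - Real.exp (-u)) :=
      mul_le_mul_of_nonneg_left h3 hε0
    linarith

lemma my_rpow_factor {x ε : ℝ} (hx : 0 < x) (hε0 : 0 ≤ ε)
    (hl0 : 0 ≤ ε * Real.log (1/x)) (hl : ε * Real.log (1/x) ≤ 1/6) :
    x ^ (1 - ε) ≤ x * (1 + 1.2 * (ε * Real.log (1/x))) := by
  have hlog : Real.log (1/x) = -Real.log x := by rw [one_div, Real.log_inv]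
  rw [Real.rpow_def_of_pos hx]
  have key : Real.log x * (1 - ε) = Real.log x + ε * Real.log (1/x) := by
    rw [hlog]; ring
  rw [key, Real.exp_add, Real.exp_log hx]
  exact mul_le_mul_of_nonneg_left (my_exp_le_one_add hl0 hl) hx.le

lemma my_alg (α β ε a b : ℝ) (hα0 : 0 < α) (hα1 : α ≤ 1) (hβ0 : 0 < β) (hβ1 : β ≤ 1)
    (hε : 0 ≤ ε) (ha : 0 ≤ a) (hb : 0 ≤ b)
    (hA : ε + a ≤ α/10) (hB : ε + b ≤ α*β/10) :
    ε + (1+1.2*b)*((1-β)+ε*β) + β*(1+1.2*a)*(1+1.2*b)*((1-α)+ε*α) ≤ 1 - α*β/10 := by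
  have hε' : ε ≤ α/10 := by linarith
  have ha' : a ≤ α/10 := by linarith
  have hε2 : ε ≤ α*β/10 := by linarith
  have hb' : b ≤ α*β/10 := by linarith
  have hεle : ε ≤ 1/10 := by linarith
  have k1 : ε*β ≤ α*β/10 := by nlinarith
  have k2 : 1.2*b*(1-β+ε*β) ≤ 1.2*(α*β/10) := by
    nlinarith [mul_nonneg hb (by nlinarith : (0:ℝ) ≤ β - ε*β)]
  have k3 : β*ε*α ≤ α*β/10 := by nlinarith
  have hfac : β*(1-α+ε*α) ≤ β := by
    nlinarith [mul_nonneg (mul_nonneg hβ0.le hα0.le) (by linarith : (0:ℝ) ≤ 1 - ε)]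
  have hS : (0:ℝ) ≤ 1.2*a+1.2*b+1.44*(a*b) := by positivity
  have k4a : β*(1-α+ε*α)*(1.2*a+1.2*b+1.44*(a*b)) ≤ β*(1.2*a+1.2*b+1.44*(a*b)) :=
    mul_le_mul_of_nonneg_right hfac hS
  have k4c : a*β ≤ (α/10)*β := mul_le_mul_of_nonneg_right ha' hβ0.le
  have k4d : b*β ≤ α*β/10 := by nlinarith [mul_nonneg hb (by linarith : (0:ℝ) ≤ 1 - β)]
  have k4e : a*b*β ≤ (α/10)*(α*β/10) := by
    have e1 : a*b ≤ (α/10)*(α*β/10) := mul_le_mul ha' hb' hb (by linarith)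
    have e2 : a*b*β ≤ a*b := by
      nlinarith [mul_nonneg (mul_nonneg ha hb) (by linarith : (0:ℝ) ≤ 1 - β)]
    linarith
  have hab : (α/10)*(α*β/10) ≤ α*β/100 := by
    nlinarith [mul_nonneg (mul_nonneg hα0.le hβ0.le) (by linarith : (0:ℝ) ≤ 1 - α)]
  have k4b : β*(1.2*a+1.2*b+1.44*(a*b)) = 1.2*(a*β)+1.2*(b*β)+1.44*(a*b*β) := by ring
  have expand : ε + (1+1.2*b)*((1-β)+ε*β) + β*(1+1.2*a)*(1+1.2*b)*((1-α)+ε*α)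
      = 1 - α*β + (ε + ε*β + β*ε*α + 1.2*b*(1-β+ε*β)
        + β*(1-α+ε*α)*(1.2*a+1.2*b+1.44*(a*b))) := by ring
  rw [expand]
  linarith [k1, k2, k3, k4a, k4b, k4c, k4d, k4e, hab, hε2]

theorem key_inequality (α β γ ε : ℝ)
    (hα0 : 0 < α) (hα1 : α ≤ 1) (hβ0 : 0 < β) (hβ1 : β ≤ 1)
    (hγ0 : 0 < γ) (hγ1 : γ ≤ 1) (hε0 : 0 < ε) (hε1 : ε < 1/10)
    (h1 : α * β > 10 * ε * (1 + Real.log (1/γ)))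
    (h2 : α > 10 * ε * (1 + Real.log (1/β))) :
    (1 - γ) ^ (1 - ε) + (γ * (1 - β)) ^ (1 - ε) + (β * γ * (1 - α)) ^ (1 - ε)
      ≤ 1 - α * β * γ / 10 ∧ 1 - α * β * γ / 10 < 1 := by
  have hγpos : 0 < α * β * γ := by positivity
  refine ⟨?_, by linarith⟩
  set a := ε * Real.log (1/β) with ha_def
  set b := ε * Real.log (1/γ) with hb_def
  have huβ : 0 ≤ Real.log (1/β) := Real.log_nonneg (by rw [le_div_iff₀ hβ0]; linarith)
  have huγ : 0 ≤ Real.log (1/γ) := Real.log_nonneg (by rw [le_div_iff₀ hγ0]; linarith)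
  have ha0 : 0 ≤ a := mul_nonneg hε0.le huβ
  have hb0 : 0 ≤ b := mul_nonneg hε0.le huγ
  have hA : ε + a ≤ α/10 := by nlinarith [h2]
  have hB : ε + b ≤ α*β/10 := by nlinarith [h1]
  have hαβ1 : α * β ≤ 1 := by nlinarith
  have ha6 : a ≤ 1/6 := by nlinarith
  have hb6 : b ≤ 1/6 := by nlinarith
  -- factor bounds
  have hγf : γ ^ (1 - ε) ≤ γ * (1 + 1.2 * b) := my_rpow_factor hγ0 hε0.le hb0 hb6
  have hβf : β ^ (1 - ε) ≤ β * (1 + 1.2 * a) := my_rpow_factor hβ0 hε0.le ha0 ha6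
  -- term 1
  have hT1 : (1 - γ) ^ (1 - ε) ≤ (1 - γ) + ε * γ := by
    have := my_rpow_le (x := 1 - γ) (ε := ε) (by linarith) (by linarith) hε0.le hε1.le
    linarith [this]
  -- term 2
  have h1β : (1 - β) ^ (1 - ε) ≤ (1 - β) + ε * β := by
    have := my_rpow_le (x := 1 - β) (ε := ε) (by linarith) (by linarith) hε0.le hε1.le
    linarith [this]
  have h1α : (1 - α) ^ (1 - ε) ≤ (1 - α) + ε * α := by
    have := my_rpow_le (x := 1 - α) (ε := ε) (by linarith) (by linarith) hε0.le hε1.le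
    linarith [this]
  have hT2 : (γ * (1 - β)) ^ (1 - ε) ≤ (γ * (1 + 1.2 * b)) * ((1 - β) + ε * β) := by
    rw [Real.mul_rpow hγ0.le (by linarith)]
    exact mul_le_mul hγf h1β (Real.rpow_nonneg (by linarith) _)
      (by nlinarith [mul_nonneg hγ0.le hb0])
  have hT3 : (β * γ * (1 - α)) ^ (1 - ε)
      ≤ (β * (1 + 1.2 * a)) * (γ * (1 + 1.2 * b)) * ((1 - α) + ε * α) := by
    rw [Real.mul_rpow (by positivity) (by linarith : (0:ℝ) ≤ 1 - α),
      Real.mul_rpow hβ0.le hγ0.le]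
    have hmm : β ^ (1-ε) * γ ^ (1-ε) ≤ (β * (1 + 1.2 * a)) * (γ * (1 + 1.2 * b)) :=
      mul_le_mul hβf hγf (Real.rpow_nonneg hγ0.le _)
        (by nlinarith [mul_nonneg hβ0.le ha0])
    exact mul_le_mul hmm h1α (Real.rpow_nonneg (by linarith) _)
      (by nlinarith [mul_nonneg hβ0.le ha0, mul_nonneg hγ0.le hb0,
        mul_nonneg (mul_nonneg hβ0.le ha0) (mul_nonneg hγ0.le hb0)])
  have Q := my_alg α β ε a b hα0 hα1 hβ0 hβ1 hε0.le ha0 hb0 hA hB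
  have Qγ := mul_le_mul_of_nonneg_left Q hγ0.le
  nlinarith [hT1, hT2, hT3, Qγ]
end

section
/- Let n ≥ 2 and define T : ℝ≥0 → ℝ≥0 by the properties: T(S) ≤ S for all S, and for S > n^{2.5}, T(S) ≤ T((1-γ)S) + T(γ(1-β)S) + T(βγ(1-α)S), where 0 < α, β, γ ≤ 1. If ε ∈ (0, 1/10) satisfies αβ > 10ε(1 + log(1/γ)) and α > 10ε(1 + log(1/β)), then T(S) ≤ n^{2.5} · (S/n^{2.5})^{1-ε} for all S, and in particular T(n^3) ≤ n^{3-ε/2}. -/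
/-!
Put `p = 1 - ε` and `N = n ^ 2.5`. Below `N` the bound `N (S / N) ^ p` dominates `T S ≤ S` because
`p ≤ 1`, and it is multiplicative: `N (f S / N) ^ p = f ^ p · N (S / N) ^ p`. So it propagates up
the recursion as long as the three fractions `f` of `S` handed to the recursive calls satisfy
`∑ f ^ p ≤ 1`; since every `f < 1`, induction on the number of levels above `N` gives the first
bound, and the second is its value at `S = n ^ 3`.

For `∑ f ^ p ≤ 1`, write each fraction as `y (1 - z)` and use Bernoulli's inequality
`(1 - z) ^ p ≤ 1 - p z` together with `y ^ p = y exp (ε log (1 / y)) ≤ y (1 + 2 ε log (1 / y))`.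
At `ε = 0` the fractions sum to `1 - αβγ`, and the hypotheses on `ε` make the error terms,
of order `εγ (1 + log (1 / γ) + β log (1 / β))`, smaller than this slack `αβγ`.
-/

open NNReal

namespace Real

lemma exp_le_one_add_two_mul {t : ℝ} (h0 : 0 ≤ t) (h1 : t ≤ 1 / 2) : exp t ≤ 1 + 2 * t := by
  refine (exp_bound_div_one_sub_of_interval h0 (by linarith)).trans ?_
  rw [div_le_iff₀ (by linarith)]
  nlinarith

lemma rpow_one_sub_le_mul_one_add_log {y ε : ℝ} (hy0 : 0 < y) (hy1 : y ≤ 1) (hε : 0 ≤ ε)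
    (hL : ε * log (1 / y) ≤ 1 / 2) : y ^ (1 - ε) ≤ y * (1 + 2 * (ε * log (1 / y))) := by
  have hL0 : 0 ≤ log (1 / y) := log_nonneg (by rw [le_div_iff₀ hy0]; linarith)
  have hsplit : y ^ (1 - ε) = y * exp (ε * log (1 / y)) := by
    rw [rpow_def_of_pos hy0, one_div, log_inv, ← exp_log hy0, ← exp_add, log_exp]
    ring_nf
  rw [hsplit]
  exact mul_le_mul_of_nonneg_left (exp_le_one_add_two_mul (mul_nonneg hε hL0) hL) hy0.le

lemma mul_one_sub_rpow_le {y z ε : ℝ} (hy0 : 0 < y) (hy1 : y ≤ 1) (hz0 : 0 ≤ z) (hz1 : z ≤ 1)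
    (hε0 : 0 ≤ ε) (hε1 : ε ≤ 1) (hL : ε * log (1 / y) ≤ 1 / 2) :
    (y * (1 - z)) ^ (1 - ε) ≤ y * (1 - (1 - ε) * z + 2 * (ε * log (1 / y))) := by
  have hL0 : 0 ≤ ε * log (1 / y) :=
    mul_nonneg hε0 (log_nonneg (by rw [le_div_iff₀ hy0]; linarith))
  have hz : (1 - z) ^ (1 - ε) ≤ 1 - (1 - ε) * z := by
    simpa [sub_eq_add_neg] using
      rpow_one_add_le_one_add_mul_self (s := -z) (by linarith) (by linarith)
        (by linarith : 1 - ε ≤ 1)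
  have hz' : 0 ≤ 1 - (1 - ε) * z := by nlinarith
  calc (y * (1 - z)) ^ (1 - ε) = y ^ (1 - ε) * (1 - z) ^ (1 - ε) := mul_rpow hy0.le (by linarith)
    _ ≤ y * (1 + 2 * (ε * log (1 / y))) * (1 - (1 - ε) * z) :=
        mul_le_mul (rpow_one_sub_le_mul_one_add_log hy0 hy1 hε0 hL) hz (by positivity)
          (by positivity)
    _ ≤ y * (1 - (1 - ε) * z + 2 * (ε * log (1 / y))) := by
        rw [mul_assoc]
        gcongr
        nlinarith [mul_nonneg hL0 (mul_nonneg (sub_nonneg.2 hε1) hz0)]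

lemma one_sub_rpow_add_mul_one_sub_rpow_add_mul_one_sub_rpow_le_one {α β γ ε : ℝ}
    (hα0 : 0 < α) (hα1 : α ≤ 1) (hβ0 : 0 < β) (hβ1 : β ≤ 1) (hγ0 : 0 < γ) (hγ1 : γ ≤ 1)
    (hε0 : 0 ≤ ε) (h1 : α * β > 10 * ε * (1 + log (1 / γ)))
    (h2 : α > 10 * ε * (1 + log (1 / β))) :
    (1 - γ) ^ (1 - ε) + (γ * (1 - β)) ^ (1 - ε) + (β * γ * (1 - α)) ^ (1 - ε) ≤ 1 := by
  set Lβ := log (1 / β)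
  set Lγ := log (1 / γ)
  have hLβ : 0 ≤ Lβ := log_nonneg (by rw [le_div_iff₀ hβ0]; linarith)
  have hLγ : 0 ≤ Lγ := log_nonneg (by rw [le_div_iff₀ hγ0]; linarith)
  have hLβγ : log (1 / (β * γ)) = Lβ + Lγ := by
    rw [← one_div_mul_one_div, log_mul (by positivity) (by positivity)]
  have hαβ : α * β ≤ 1 := mul_le_one₀ hα1 hβ0.le hβ1
  have hε1 : ε ≤ 1 := by linarith [mul_nonneg hε0 hLβ]
  have hA := mul_one_sub_rpow_le zero_lt_one le_rfl hγ0.le hγ1 hε0 hε1 (by simp)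
  have hB := mul_one_sub_rpow_le hγ0 hγ1 hβ0.le hβ1 hε0 hε1 (by linarith [mul_nonneg hε0 hLγ])
  have hC := mul_one_sub_rpow_le (mul_pos hβ0 hγ0) (mul_le_one₀ hβ1 hγ0.le hγ1) hα0.le hα1
    hε0 hε1 (by rw [hLβγ]; linarith [mul_nonneg hε0 hLγ, mul_nonneg hε0 hLβ])
  rw [hLβγ] at hC
  simp only [one_mul, one_div_one, log_one, mul_zero] at hA
  have hbracket : ε + ε * β + ε * α * β + 2 * ε * Lγ + 2 * ε * β * Lβ + 2 * ε * β * Lγ ≤ α * β := by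
    linarith [mul_nonneg hε0 hLγ, mul_le_mul_of_nonneg_left h2.le hβ0.le, mul_pos hα0 hβ0,
      mul_nonneg (mul_nonneg hε0 hLγ) (sub_nonneg.2 hβ1),
      mul_nonneg (mul_nonneg hε0 hβ0.le) (sub_nonneg.2 hα1)]
  linarith [mul_le_mul_of_nonneg_left hbracket hγ0.le]

end Real

namespace NNReal

lemma le_mul_div_rpow_of_le {S N : ℝ≥0} {p : ℝ} (hN : 0 < N) (hp : p ≤ 1) (hS : S ≤ N) :
    S ≤ N * (S / N) ^ p := by
  rcases eq_or_ne S 0 with rfl | hS0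
  · exact zero_le
  calc S = N * (S / N) ^ (1 : ℝ) := by rw [rpow_one, mul_div_cancel₀ _ hN.ne']
    _ ≤ N * (S / N) ^ p := mul_le_mul_right (rpow_le_rpow_of_exponent_ge
          (div_pos (pos_iff_ne_zero.2 hS0) hN) (div_le_one_of_le₀ hS hN.le) hp) N

theorem le_mul_div_rpow_of_le_sum {ι : Type*} [Fintype ι] {N : ℝ≥0} {p : ℝ} (hN : 0 < N)
    {f : ι → ℝ≥0} (hf : ∀ i, f i < 1) (hsum : ∑ i, f i ^ p ≤ 1) {T : ℝ≥0 → ℝ≥0}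
    (hbase : ∀ S ≤ N, T S ≤ N * (S / N) ^ p) (hrec : ∀ S, N < S → T S ≤ ∑ i, T (f i * S))
    (S : ℝ≥0) : T S ≤ N * (S / N) ^ p := by
  set q := Finset.univ.sup f
  have hq : q < 1 := (Finset.sup_lt_iff zero_lt_one).2 fun i _ ↦ hf i
  have hlevel : ∀ k : ℕ, ∀ S, S * q ^ k ≤ N → T S ≤ N * (S / N) ^ p := by
    intro k
    induction k with
    | zero => exact fun S hS ↦ hbase S (by simpa using hS)
    | succ k ih =>
      intro S hS
      rcases le_or_gt S N with hSN | hSN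
      · exact hbase S hSN
      have hchild (i : ι) : T (f i * S) ≤ f i ^ p * (N * (S / N) ^ p) := by
        refine (ih _ ?_).trans_eq (by rw [mul_div_assoc, mul_rpow]; ring)
        calc f i * S * q ^ k ≤ q * S * q ^ k := by gcongr; exact Finset.le_sup (Finset.mem_univ i)
          _ = S * q ^ (k + 1) := by ring
          _ ≤ N := hS
      calc T S ≤ ∑ i, T (f i * S) := hrec S hSN
        _ ≤ ∑ i, f i ^ p * (N * (S / N) ^ p) := Finset.sum_le_sum fun i _ ↦ hchild i
        _ = (∑ i, f i ^ p) * (N * (S / N) ^ p) := (Finset.sum_mul ..).symm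
        _ ≤ N * (S / N) ^ p := mul_le_of_le_one_left zero_le hsum
  rcases le_or_gt S N with hSN | hSN
  · exact hbase S hSN
  obtain ⟨k, hk⟩ := exists_pow_lt_of_lt_one (div_pos hN (hN.trans hSN)) hq
  refine hlevel k S ?_
  calc S * q ^ k ≤ S * (N / S) := by gcongr
    _ = N := mul_div_cancel₀ _ (hN.trans hSN).ne'

/-- The fractions of `S = |A||B||C|` handed to the three recursive calls. -/
def splitFractions (α β γ : ℝ≥0) : Fin 3 → ℝ≥0 := ![1 - γ, γ * (1 - β), β * γ * (1 - α)]

lemma splitFractions_lt_one {α β γ : ℝ≥0} (hα : 0 < α) (hβ0 : 0 < β) (hβ1 : β ≤ 1) (hγ0 : 0 < γ)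
    (hγ1 : γ ≤ 1) (i : Fin 3) : splitFractions α β γ i < 1 := by
  fin_cases i
  · exact tsub_lt_self one_pos hγ0
  · exact mul_lt_one_of_nonneg_of_lt_one_right hγ1 zero_le (tsub_lt_self one_pos hβ0)
  · exact mul_lt_one_of_nonneg_of_lt_one_right (mul_le_one' hβ1 hγ1) zero_le
      (tsub_lt_self one_pos hα)

lemma sum_splitFractions_rpow_le_one {α β γ ε : ℝ≥0} (hα0 : 0 < α) (hα1 : α ≤ 1) (hβ0 : 0 < β)
    (hβ1 : β ≤ 1) (hγ0 : 0 < γ) (hγ1 : γ ≤ 1)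
    (h1 : (α : ℝ) * β > 10 * ε * (1 + Real.log (1 / (γ : ℝ))))
    (h2 : (α : ℝ) > 10 * ε * (1 + Real.log (1 / (β : ℝ)))) :
    ∑ i, splitFractions α β γ i ^ (1 - (ε : ℝ)) ≤ 1 := by
  rw [← coe_le_coe]
  push_cast [splitFractions, Fin.sum_univ_three, NNReal.coe_sub hα1, NNReal.coe_sub hβ1,
    NNReal.coe_sub hγ1]
  exact Real.one_sub_rpow_add_mul_one_sub_rpow_add_mul_one_sub_rpow_le_one hα0 hα1 hβ0 hβ1 hγ0
    hγ1 ε.coe_nonneg h1 h2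

end NNReal

theorem recurrence_bound_general (n : ℝ≥0) (hn : 2 ≤ n) (α β γ ε : ℝ≥0)
    (hα0 : 0 < α) (hα1 : α ≤ 1) (hβ0 : 0 < β) (hβ1 : β ≤ 1)
    (hγ0 : 0 < γ) (hγ1 : γ ≤ 1)
    (h1 : (α : ℝ) * β > 10 * ε * (1 + Real.log (1 / (γ : ℝ))))
    (h2 : (α : ℝ) > 10 * ε * (1 + Real.log (1 / (β : ℝ))))
    (T : ℝ≥0 → ℝ≥0)
    (hT1 : ∀ S, T S ≤ S)
    (hT2 : ∀ S, n ^ (2.5 : ℝ) < S →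
      T S ≤ T ((1 - γ) * S) + T (γ * (1 - β) * S) + T (β * γ * (1 - α) * S)) :
    (∀ S, T S ≤ n ^ (2.5 : ℝ) * (S / n ^ (2.5 : ℝ)) ^ (1 - (ε : ℝ)))
      ∧ T (n ^ (3 : ℝ)) ≤ n ^ (3 - (ε : ℝ) / 2) := by
  have hn0 : 0 < n := two_pos.trans_le hn
  have hbound : ∀ S, T S ≤ n ^ (2.5 : ℝ) * (S / n ^ (2.5 : ℝ)) ^ (1 - (ε : ℝ)) :=
    NNReal.le_mul_div_rpow_of_le_sum (rpow_pos hn0)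
      (NNReal.splitFractions_lt_one hα0 hβ0 hβ1 hγ0 hγ1)
      (NNReal.sum_splitFractions_rpow_le_one hα0 hα1 hβ0 hβ1 hγ0 hγ1 h1 h2)
      (fun S hS ↦ (hT1 S).trans (NNReal.le_mul_div_rpow_of_le (rpow_pos hn0) (by simp) hS))
      (by simpa [NNReal.splitFractions, Fin.sum_univ_three] using hT2)
  refine ⟨hbound, (hbound _).trans_eq ?_⟩
  rw [← rpow_sub hn0.ne', ← rpow_mul, ← rpow_add hn0.ne']
  congr 1
  norm_num
  ring

theorem recurrence_bound (n : ℝ≥0) (hn : 2 ≤ n) (α β γ ε : ℝ≥0)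
    (hα0 : 0 < α) (hα1 : α ≤ 1) (hβ0 : 0 < β) (hβ1 : β ≤ 1)
    (hγ0 : 0 < γ) (hγ1 : γ ≤ 1) (hε0 : 0 < ε) (hε1 : (ε : ℝ) < 1/10)
    (h1 : (α : ℝ) * β > 10 * ε * (1 + Real.log (1 / (γ : ℝ))))
    (h2 : (α : ℝ) > 10 * ε * (1 + Real.log (1 / (β : ℝ))))
    (T : ℝ≥0 → ℝ≥0)
    (hT1 : ∀ S, T S ≤ S)
    (hT2 : ∀ S, n ^ (2.5 : ℝ) < S →
      T S ≤ T ((1 - γ) * S) + T (γ * (1 - β) * S) + T (β * γ * (1 - α) * S)) :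
    (∀ S, T S ≤ n ^ (2.5 : ℝ) * (S / n ^ (2.5 : ℝ)) ^ (1 - (ε : ℝ)))
      ∧ T (n ^ (3 : ℝ)) ≤ n ^ (3 - (ε : ℝ) / 2) :=
  recurrence_bound_general n hn α β γ ε hα0 hα1 hβ0 hβ1 hγ0 hγ1 h1 h2 T hT1 hT2
end

section
/- Consider two finite binary trees 𝓡 and 𝓡' with identical shape. In 𝓡, every internal node with value x and parameters t ∈ (1/Δ, 1], t' ∈ (0,1] has left child value (1-t')x and right child value t'(1-t)x. In 𝓡', the corresponding node with value x' has left child (1-t')x' and right child t'·x' (same t'). If the roots have equal value S > 0, then for every node reached from the root by a path containing k right-child-moves, the value in 𝓡' is at least (1-1/Δ)^(-k) times the value of the corresponding node in 𝓡. -/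
/-!
Dividing the value of a node of `𝓡` by `(1 - 1/Δ)^k` amounts to dividing each of the `k`
right-child factors `t'(1-t)` by `1 - 1/Δ`; since `t > 1/Δ`, each of these quotients is at most
the corresponding factor `t'` of `𝓡'`, while the left-child factors `1 - t'` agree.
-/

namespace List

variable {α R : Type*}

theorem prod_map_ite_mul_eq_pow_countP_mul [CommMonoid R] (l : List α) (P : α → Bool) (c : R)
    (f : α → R) :
    (l.map fun a => if P a then c * f a else f a).prod = c ^ l.countP P * (l.map f).prod := by
  induction l with
  | nil => simp
  | cons a l ih =>
    cases h : P a <;> simp [h, ih, pow_succ, mul_assoc, mul_left_comm]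

theorem prod_map_le_prod_map_of_nonneg [CommSemiring R] [PartialOrder R] [IsOrderedRing R]
    {l : List α} {f g : α → R} (hf : ∀ a ∈ l, 0 ≤ f a) (hfg : ∀ a ∈ l, f a ≤ g a) :
    (l.map f).prod ≤ (l.map g).prod := by
  induction l with
  | nil => simp
  | cons a l ih =>
    simp only [map_cons, prod_cons]
    have hf' : ∀ b ∈ l, 0 ≤ f b := fun b hb => hf b (mem_cons_of_mem a hb)
    exact mul_le_mul (hfg a mem_cons_self)
      (ih hf' fun b hb => hfg b (mem_cons_of_mem a hb))
      (prod_nonneg <| by simpa using hf') ((hf a mem_cons_self).trans (hfg a mem_cons_self))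

end List

theorem inv_one_sub_mul_mul_one_sub_le {s t u : ℝ} (hs : s < 1) (hst : s < t) (hu : 0 ≤ u) :
    (1 - s)⁻¹ * (u * (1 - t)) ≤ u := by
  rw [inv_mul_le_iff₀ (by linarith)]
  nlinarith

/-- A node is encoded by its path from the root; a step `(b, t, t')` goes to the right child
(`b = true`) or the left child of a node with parameters `t, t'`. -/
theorem tree_comparison (Δ S : ℝ) (hΔ : 1 < Δ) (hS : 0 < S)
    (path : List (Bool × ℝ × ℝ))
    (hparams : ∀ p ∈ path, 1/Δ < p.2.1 ∧ p.2.1 ≤ 1 ∧ 0 < p.2.2 ∧ p.2.2 ≤ 1) :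
    ((1 - 1/Δ) ^ (path.countP (fun p => p.1)))⁻¹ *
        (S * (path.map (fun p => if p.1 then p.2.2 * (1 - p.2.1) else 1 - p.2.2)).prod)
      ≤ S * (path.map (fun p => if p.1 then p.2.2 else 1 - p.2.2)).prod := by
  have hΔ' : 1 / Δ < 1 := (div_lt_one (by linarith)).2 hΔ
  rw [mul_left_comm, ← inv_pow, ← List.prod_map_ite_mul_eq_pow_countP_mul]
  refine mul_le_mul_of_nonneg_left (List.prod_map_le_prod_map_of_nonneg ?_ ?_) hS.le <;>
    rintro ⟨_ | _, t, t'⟩ hp <;> obtain ⟨ht, ht1, ht', ht'1⟩ := hparams _ hp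
  · simpa using ht'1
  · exact mul_nonneg (inv_nonneg.2 (by linarith)) (mul_nonneg ht'.le (by linarith))
  · simp
  · exact inv_one_sub_mul_mul_one_sub_le hΔ' ht ht'.le
end

section
/- Let Δ ≥ 2 be a real number and define the recurrence bound: T(S) ≤ nS for all S, and for S > nΔ⁶, T(S) ≤ max over t > 1/Δ, t' > 1/Δ², t' ≤ t ≤ 1 of [T((1-t')S) + T(t'(1-t)S)]. Then for n sufficiently large and Δ = log n/(100(log log n)²), any function T satisfying these constraints satisfies T(n²) ≤ n³/Δ^{10} + n^{2.9}. -/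
private lemma choose_le_pow_succ (n : ℕ) : ∀ k : ℕ, n.choose k ≤ (n + 1) ^ k := by
  induction n with
  | zero =>
    intro k
    cases k with
    | zero => simp
    | succ k => simp [Nat.choose]
  | succ n ih =>
    intro k
    cases k with
    | zero => simp
    | succ k =>
      rw [Nat.choose_succ_succ]
      calc n.choose k + n.choose (k + 1) ≤ (n + 1) ^ k + (n + 1) ^ (k + 1) :=
            Nat.add_le_add (ih k) (ih (k + 1))
        _ = (n + 1) ^ k * (n + 2) := by ring
        _ ≤ (n + 2) ^ k * (n + 2) :=
            Nat.mul_le_mul_right _ (Nat.pow_le_pow_left (by omega) _)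
        _ = (n + 2) ^ (k + 1) := by rw [pow_succ]

private lemma sum_choose_le_pow (D : ℕ) (hD : 1 ≤ D) : ∀ R : ℕ,
    (∑ j ∈ Finset.range R, D.choose j) ≤ (D + 1) ^ R := by
  intro R
  induction R with
  | zero => simp
  | succ R ih =>
    rw [Finset.sum_range_succ, pow_succ]
    calc (∑ j ∈ Finset.range R, D.choose j) + D.choose R ≤ (D + 1) ^ R + (D + 1) ^ R :=
          Nat.add_le_add ih (choose_le_pow_succ D R)
      _ = (D + 1) ^ R * 2 := by ring
      _ ≤ (D + 1) ^ R * (D + 1) := Nat.mul_le_mul_left _ (by omega)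

private lemma pascal_sum (d : ℕ) : ∀ r : ℕ,
    (∑ j ∈ Finset.range (r + 1), (d + 1).choose j)
      = (∑ j ∈ Finset.range (r + 1), d.choose j) + ∑ j ∈ Finset.range r, d.choose j := by
  intro r
  induction r with
  | zero => simp
  | succ r ih =>
    rw [Finset.sum_range_succ (fun j => (d + 1).choose j) (r + 1), ih,
        Finset.sum_range_succ (fun j => d.choose j) (r + 1),
        Finset.sum_range_succ (fun j => d.choose j) r,
        Nat.choose_succ_succ']
    omega

set_option maxHeartbeats 4000000 in
theorem small_graph_recurrence :
    ∃ N : ℝ, ∀ n : ℝ, N ≤ n →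
    ∀ Δ : ℝ, Δ = Real.log n / (100 * (Real.log (Real.log n)) ^ 2) → 2 ≤ Δ →
    ∀ T : ℝ → ℝ,
    (∀ S : ℝ, T S ≤ n * S) →
    (∀ S : ℝ, n * Δ ^ 6 < S → ∃ t t' : ℝ, 1 / Δ < t ∧ t ≤ 1 ∧ 1 / Δ ^ 2 < t' ∧ t' ≤ t ∧
      T S ≤ T ((1 - t') * S) + T (t' * (1 - t) * S)) →
    T (n ^ 2) ≤ n ^ 3 / Δ ^ 10 + n ^ (2.9 : ℝ) := by
  refine ⟨Real.exp (Real.exp 1), ?_⟩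
  intro n hn Δ hΔdef hΔ2 T hbase hrec
  have hexp1 : (2 : ℝ) ≤ Real.exp 1 := by
    have := Real.add_one_le_exp (1 : ℝ); linarith
  have hn0 : (0 : ℝ) < n := lt_of_lt_of_le (Real.exp_pos _) hn
  set L := Real.log n with hLdef
  set M := Real.log L with hMdef
  have hLe : Real.exp 1 ≤ L := by
    rw [hLdef]
    calc Real.exp 1 = Real.log (Real.exp (Real.exp 1)) := (Real.log_exp _).symm
      _ ≤ Real.log n := Real.log_le_log (Real.exp_pos _) hn
  have hL2 : (2 : ℝ) ≤ L := le_trans hexp1 hLe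
  have hL0 : (0 : ℝ) < L := by linarith
  have hM1 : (1 : ℝ) ≤ M := by
    rw [hMdef]
    calc (1 : ℝ) = Real.log (Real.exp 1) := (Real.log_exp 1).symm
      _ ≤ Real.log L := Real.log_le_log (Real.exp_pos 1) hLe
  have hM0 : (0 : ℝ) < M := by linarith
  have hΔL : Δ = L / (100 * M ^ 2) := hΔdef
  have hΔ0 : (0 : ℝ) < Δ := by linarith
  have hΔne : Δ ≠ 0 := ne_of_gt hΔ0
  have h100M : (0 : ℝ) < 100 * M ^ 2 := by positivity
  have hΔeq : Δ * (100 * M ^ 2) = L := by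
    rw [hΔL]; field_simp
  have hLM2 : 200 * M ^ 2 ≤ L := by
    nlinarith [mul_nonneg (sub_nonneg.mpr hΔ2) (sq_nonneg M)]
  have hMsq : M ≤ M ^ 2 := by nlinarith [mul_nonneg (sub_nonneg.mpr hM1) hM0.le]
  have hLM : 15 * M ≤ L := by nlinarith
  have hΔleL : Δ ≤ L := by
    have h := mul_le_mul_of_nonneg_left (by nlinarith : (1:ℝ) ≤ 100 * M ^ 2) hΔ0.le
    nlinarith
  have hlogΔ0 : (0 : ℝ) < Real.log Δ := Real.log_pos (by linarith)
  have hlogΔM : Real.log Δ ≤ M := by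
    rw [hMdef]; exact Real.log_le_log hΔ0 hΔleL
  -- threshold
  set θ := n * Δ ^ 6 with hθdef
  have hΔ6 : (1 : ℝ) ≤ Δ ^ 6 := by
    have h := pow_le_pow_left₀ (by norm_num : (0:ℝ) ≤ 1) (by linarith : (1:ℝ) ≤ Δ) 6
    simpa using h
  have hθ0 : (0 : ℝ) < θ := by rw [hθdef]; positivity
  have hθn : n ≤ θ := by
    have h := mul_le_mul_of_nonneg_left hΔ6 hn0.le
    rw [hθdef]; linarith
  -- shrink factors
  set q := 1 - 1 / Δ ^ 2 with hqdef
  set ρ := 1 - 1 / Δ with hρdef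
  have hΔ2sq : (4 : ℝ) ≤ Δ ^ 2 := by nlinarith [sq_nonneg (Δ - 2)]
  have hinvΔ2 : 1 / Δ ^ 2 ≤ 1 / 4 := by
    apply one_div_le_one_div_of_le (by norm_num) hΔ2sq
  have hinvΔ2pos : (0 : ℝ) < 1 / Δ ^ 2 := by positivity
  have hinvΔpos : (0 : ℝ) < 1 / Δ := by positivity
  have hinvΔ : 1 / Δ ≤ 1 / 2 := by
    apply one_div_le_one_div_of_le (by norm_num) (by linarith)
  have hq0 : (0 : ℝ) ≤ q := by rw [hqdef]; linarith
  have hρ0 : (0 : ℝ) ≤ ρ := by rw [hρdef]; linarith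
  have hρq : ρ ≤ q := by
    have h : 1 / Δ ^ 2 ≤ 1 / Δ := by
      apply one_div_le_one_div_of_le hΔ0 (by nlinarith [mul_nonneg (by linarith : (0:ℝ) ≤ Δ - 1) hΔ0.le])
    rw [hρdef, hqdef]; linarith
  -- the counting function
  set K : ℕ → ℕ → ℝ := fun d r => ∑ j ∈ Finset.range r, ((d.choose j : ℕ) : ℝ) with hKdef
  have hK0 : ∀ d : ℕ, K d 0 = 0 := by intro d; simp [hKdef]
  have hK1 : ∀ d r : ℕ, (1 : ℝ) ≤ K d (r + 1) := by
    intro d r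
    have h0 : ((d.choose 0 : ℕ) : ℝ) ≤ ∑ j ∈ Finset.range (r + 1), ((d.choose j : ℕ) : ℝ) :=
      Finset.single_le_sum (f := fun j => ((d.choose j : ℕ) : ℝ))
        (fun i _ => by positivity) (Finset.mem_range.mpr (Nat.succ_pos r))
    simp only [hKdef]
    simpa using h0
  have hKpascal : ∀ d r : ℕ, K d (r + 1) + K d r = K (d + 1) (r + 1) := by
    intro d r
    simp only [hKdef]
    exact_mod_cast (pascal_sum d r).symm
  -- leaf case
  have leaf : ∀ (d r : ℕ) (S : ℝ), 0 ≤ S → S ≤ θ → T S ≤ n * S * ρ ^ r + n * θ * K d r := by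
    intro d r S hS0 hSθ
    cases r with
    | zero =>
      have h := hbase S
      simp only [pow_zero, mul_one, hK0, mul_zero, add_zero]
      exact h
    | succ r =>
      have h1 : T S ≤ n * S := hbase S
      have h2 : n * S ≤ n * θ := mul_le_mul_of_nonneg_left hSθ hn0.le
      have h3 : (1 : ℝ) ≤ K d (r + 1) := hK1 d r
      have h4 : (0 : ℝ) ≤ n * S * ρ ^ (r + 1) :=
        mul_nonneg (mul_nonneg hn0.le hS0) (pow_nonneg hρ0 _)
      have h5 : n * θ * 1 ≤ n * θ * K d (r + 1) :=
        mul_le_mul_of_nonneg_left h3 (mul_nonneg hn0.le hθ0.le)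
      linarith
  -- main induction
  have H : ∀ d r : ℕ, ∀ S : ℝ, 0 ≤ S → S * q ^ d ≤ θ →
      T S ≤ n * S * ρ ^ r + n * θ * K d r := by
    intro d
    induction d with
    | zero =>
      intro r S hS0 hSθ
      exact leaf 0 r S hS0 (by simpa using hSθ)
    | succ d ih =>
      intro r S hS0 hSθ
      by_cases hcase : S ≤ θ
      · exact leaf (d + 1) r S hS0 hcase
      · push_neg at hcase
        obtain ⟨t, t', htΔ, ht1, ht'Δ, ht't, hTS⟩ := hrec S hcase
        have hSpos : 0 < S := lt_trans hθ0 hcase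
        have ht'0 : 0 < t' := lt_trans hinvΔ2pos ht'Δ
        have ht0 : 0 < t := lt_of_lt_of_le ht'0 ht't
        have ht'1 : t' ≤ 1 := le_trans ht't ht1
        have h1t' : 1 - t' ≤ q := by rw [hqdef]; linarith
        have h1t : 1 - t ≤ ρ := by rw [hρdef]; linarith
        have ha0 : 0 ≤ (1 - t') * S := mul_nonneg (by linarith) hS0
        have hb0 : 0 ≤ t' * (1 - t) * S := mul_nonneg (mul_nonneg ht'0.le (by linarith)) hS0
        have hqd0 : (0 : ℝ) ≤ q ^ d := pow_nonneg hq0 d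
        have haq : (1 - t') * S ≤ q * S := mul_le_mul_of_nonneg_right h1t' hS0
        have hbq : t' * (1 - t) * S ≤ q * S := by
          have h2 : t' * (1 - t) ≤ q := by
            have h2a : t' * (1 - t) ≤ 1 * (1 - t) :=
              mul_le_mul_of_nonneg_right ht'1 (by linarith)
            linarith
          exact mul_le_mul_of_nonneg_right h2 hS0
        have haθ : ((1 - t') * S) * q ^ d ≤ θ := by
          calc ((1 - t') * S) * q ^ d ≤ (q * S) * q ^ d :=
                mul_le_mul_of_nonneg_right haq hqd0
            _ = S * q ^ (d + 1) := by ring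
            _ ≤ θ := hSθ
        have hbθ : (t' * (1 - t) * S) * q ^ d ≤ θ := by
          calc (t' * (1 - t) * S) * q ^ d ≤ (q * S) * q ^ d :=
                mul_le_mul_of_nonneg_right hbq hqd0
            _ = S * q ^ (d + 1) := by ring
            _ ≤ θ := hSθ
        cases r with
        | zero =>
          have Ha := ih 0 _ ha0 haθ
          have Hb := ih 0 _ hb0 hbθ
          rw [hK0] at Ha Hb
          rw [hK0]
          simp only [pow_zero, mul_one, mul_zero, add_zero] at Ha Hb ⊢
          have hab : (1 - t') * S + t' * (1 - t) * S ≤ S := by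
            linarith [mul_nonneg (mul_nonneg ht'0.le ht0.le) hS0]
          have h8 : n * ((1 - t') * S + t' * (1 - t) * S) ≤ n * S :=
            mul_le_mul_of_nonneg_left hab hn0.le
          linarith
        | succ r =>
          have Ha := ih (r + 1) _ ha0 haθ
          have Hb := ih r _ hb0 hbθ
          have hρr : (0 : ℝ) ≤ ρ ^ r := pow_nonneg hρ0 r
          have hkey : (1 - t') * S * ρ + t' * (1 - t) * S ≤ S * ρ := by
            linarith [mul_nonneg (mul_nonneg ht'0.le hS0) (sub_nonneg.mpr h1t)]
          have hsum : n * ((1 - t') * S) * ρ ^ (r + 1) + n * (t' * (1 - t) * S) * ρ ^ r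
              ≤ n * S * ρ ^ (r + 1) := by
            have h6 : ((1 - t') * S * ρ + t' * (1 - t) * S) * ρ ^ r ≤ (S * ρ) * ρ ^ r :=
              mul_le_mul_of_nonneg_right hkey hρr
            have h7 : n * (((1 - t') * S * ρ + t' * (1 - t) * S) * ρ ^ r)
                ≤ n * ((S * ρ) * ρ ^ r) := mul_le_mul_of_nonneg_left h6 hn0.le
            calc n * ((1 - t') * S) * ρ ^ (r + 1) + n * (t' * (1 - t) * S) * ρ ^ r
                = n * (((1 - t') * S * ρ + t' * (1 - t) * S) * ρ ^ r) := by ring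
              _ ≤ n * ((S * ρ) * ρ ^ r) := h7
              _ = n * S * ρ ^ (r + 1) := by ring
          calc T S ≤ T ((1 - t') * S) + T (t' * (1 - t) * S) := hTS
            _ ≤ (n * ((1 - t') * S) * ρ ^ (r + 1) + n * θ * K d (r + 1))
                + (n * (t' * (1 - t) * S) * ρ ^ r + n * θ * K d r) := add_le_add Ha Hb
            _ = (n * ((1 - t') * S) * ρ ^ (r + 1) + n * (t' * (1 - t) * S) * ρ ^ r)
                + n * θ * (K d (r + 1) + K d r) := by ring
            _ ≤ n * S * ρ ^ (r + 1) + n * θ * (K d (r + 1) + K d r) := by linarith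
            _ = n * S * ρ ^ (r + 1) + n * θ * K (d + 1) (r + 1) := by rw [hKpascal]
  -- choose depth and right-move budgets
  set Dn := ⌈Δ ^ 2 * L⌉₊ with hDndef
  set Rn := ⌈10 * Δ * Real.log Δ⌉₊ with hRndef
  have hDn1 : 1 ≤ Dn := by
    rw [hDndef]
    exact Nat.one_le_ceil_iff.mpr (by positivity)
  -- n^2 fits in the depth budget
  have hqexp : q ≤ Real.exp (-(1 / Δ ^ 2)) := by
    have h := Real.add_one_le_exp (-(1 / Δ ^ 2))
    rw [hqdef]; linarith
  have hqD : q ^ Dn ≤ Real.exp (-L) := by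
    calc q ^ Dn ≤ Real.exp (-(1 / Δ ^ 2)) ^ Dn := pow_le_pow_left₀ hq0 hqexp Dn
      _ = Real.exp ((Dn : ℝ) * (-(1 / Δ ^ 2))) := (Real.exp_nat_mul _ _).symm
      _ ≤ Real.exp (-L) := by
          apply Real.exp_le_exp.mpr
          have hDge : Δ ^ 2 * L ≤ (Dn : ℝ) := by rw [hDndef]; exact Nat.le_ceil _
          have h9 : Δ ^ 2 * L * (1 / Δ ^ 2) ≤ (Dn : ℝ) * (1 / Δ ^ 2) :=
            mul_le_mul_of_nonneg_right hDge hinvΔ2pos.le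
          have h10 : Δ ^ 2 * L * (1 / Δ ^ 2) = L := by field_simp
          linarith only [h9, h10]
  have hn2θ : n ^ 2 * q ^ Dn ≤ θ := by
    have h11 : Real.exp (-L) = n⁻¹ := by
      rw [Real.exp_neg, hLdef, Real.exp_log hn0]
    have h12 : n ^ 2 * q ^ Dn ≤ n ^ 2 * n⁻¹ := by
      rw [← h11]; exact mul_le_mul_of_nonneg_left hqD (by positivity)
    have h13 : n ^ 2 * n⁻¹ = n := by
      rw [sq, mul_assoc, mul_inv_cancel₀ hn0.ne']; ring
    rw [h13] at h12
    exact le_trans h12 hθn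
  have hmain := H Dn Rn (n ^ 2) (by positivity) hn2θ
  -- first part: n^3 / Δ^10
  have hρexp : ρ ≤ Real.exp (-(1 / Δ)) := by
    have h := Real.add_one_le_exp (-(1 / Δ))
    rw [hρdef]; linarith
  have hΔ10 : Real.exp (10 * Real.log Δ) = Δ ^ 10 := by
    rw [show (10 : ℝ) * Real.log Δ = Real.log (Δ ^ 10) by rw [Real.log_pow]; push_cast; ring,
        Real.exp_log (by positivity)]
  have hρR : ρ ^ Rn ≤ (Δ ^ 10)⁻¹ := by
    calc ρ ^ Rn ≤ Real.exp (-(1 / Δ)) ^ Rn := pow_le_pow_left₀ hρ0 hρexp Rn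
      _ = Real.exp ((Rn : ℝ) * (-(1 / Δ))) := (Real.exp_nat_mul _ _).symm
      _ ≤ Real.exp (-(10 * Real.log Δ)) := by
          apply Real.exp_le_exp.mpr
          have hRge : 10 * Δ * Real.log Δ ≤ (Rn : ℝ) := by rw [hRndef]; exact Nat.le_ceil _
          have h14 : (10 * Δ * Real.log Δ) * (1 / Δ) ≤ (Rn : ℝ) * (1 / Δ) :=
            mul_le_mul_of_nonneg_right hRge hinvΔpos.le
          have h15 : (10 * Δ * Real.log Δ) * (1 / Δ) = 10 * Real.log Δ := by
            field_simp
          linarith only [h14, h15]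
      _ = (Δ ^ 10)⁻¹ := by rw [Real.exp_neg, hΔ10]
  have hpart1 : n * n ^ 2 * ρ ^ Rn ≤ n ^ 3 / Δ ^ 10 := by
    have h16 : n * n ^ 2 * ρ ^ Rn ≤ n ^ 3 * (Δ ^ 10)⁻¹ := by
      rw [show n * n ^ 2 = n ^ 3 by ring]
      exact mul_le_mul_of_nonneg_left hρR (by positivity)
    rw [div_eq_mul_inv]; linarith only [h16]
  -- second part: n^2.9
  have hexpM : Real.exp M = L := by rw [hMdef]; exact Real.exp_log hL0
  have hexpL : Real.exp L = n := by rw [hLdef]; exact Real.exp_log hn0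
  have hRle : (Rn : ℝ) ≤ 10 * Δ * M + 1 := by
    have h17 : (Rn : ℝ) < 10 * Δ * Real.log Δ + 1 := by
      rw [hRndef]; exact Nat.ceil_lt_add_one (by positivity)
    linarith only [h17, mul_nonneg hΔ0.le (sub_nonneg.mpr hlogΔM)]
  have hDle : (Dn : ℝ) + 1 ≤ Real.exp (3 * M) := by
    have h18 : (Dn : ℝ) < Δ ^ 2 * L + 1 := by
      rw [hDndef]; exact Nat.ceil_lt_add_one (by positivity)
    have hM2' : (1 : ℝ) ≤ M ^ 2 := by linarith only [sq_nonneg (M - 1), hM1]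
    have hΔ100 : 100 * Δ ≤ L := by
      linarith only [hΔeq, mul_nonneg hΔ0.le (sub_nonneg.mpr hM2')]
    have h20 : Δ ^ 2 ≤ (L / 100) ^ 2 := by
      linarith only [mul_nonneg (by linarith only [hΔ100] : (0:ℝ) ≤ L / 100 - Δ)
        (by linarith only [hΔ100, hΔ0] : (0:ℝ) ≤ L / 100 + Δ)]
    have h21 : Δ ^ 2 * L ≤ (L / 100) ^ 2 * L := mul_le_mul_of_nonneg_right h20 hL0.le
    have h22 : (8 : ℝ) ≤ L ^ 3 := by
      linarith only [mul_nonneg (sub_nonneg.mpr hL2) (sq_nonneg L), sq_nonneg (L - 2), hL2]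
    have h19 : Real.exp (3 * M) = L ^ 3 := by
      rw [show (3 : ℝ) * M = M + M + M by ring, Real.exp_add, Real.exp_add, hexpM]; ring
    have h23 : (L / 100) ^ 2 * L = L ^ 3 / 10000 := by ring
    rw [h19]
    linarith only [h21, h18, h22, h23]
  have hKD : K Dn Rn ≤ Real.exp (3 * M) ^ Rn := by
    have h24 : (∑ j ∈ Finset.range Rn, Dn.choose j) ≤ (Dn + 1) ^ Rn :=
      sum_choose_le_pow Dn hDn1 Rn
    have h25 : K Dn Rn = ((∑ j ∈ Finset.range Rn, Dn.choose j : ℕ) : ℝ) := by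
      simp only [hKdef]; push_cast; rfl
    rw [h25]
    calc ((∑ j ∈ Finset.range Rn, Dn.choose j : ℕ) : ℝ) ≤ (((Dn + 1) ^ Rn : ℕ) : ℝ) := by
          exact_mod_cast h24
      _ = ((Dn : ℝ) + 1) ^ Rn := by push_cast; ring
      _ ≤ Real.exp (3 * M) ^ Rn := pow_le_pow_left₀ (by positivity) hDle Rn
  have hKexp : Real.exp (3 * M) ^ Rn = Real.exp ((Rn : ℝ) * (3 * M)) :=
    (Real.exp_nat_mul _ _).symm
  have hn2exp : n ^ 2 = Real.exp (2 * L) := by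
    rw [show (2 : ℝ) * L = L + L by ring, Real.exp_add, hexpL]; ring
  have hΔ6exp : Δ ^ 6 ≤ Real.exp (6 * M) := by
    have h26 : Δ ^ 6 ≤ L ^ 6 := pow_le_pow_left₀ hΔ0.le hΔleL 6
    have h27 : Real.exp (6 * M) = L ^ 6 := by
      rw [show (6 : ℝ) * M = ((6 : ℕ) : ℝ) * M by norm_num, Real.exp_nat_mul, hexpM]
    linarith
  have hKpos : (0 : ℝ) ≤ K Dn Rn := by
    simp only [hKdef]
    exact Finset.sum_nonneg fun i _ => by positivity
  have hpart2 : n * θ * K Dn Rn ≤ n ^ (2.9 : ℝ) := by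
    have hnθ : n * θ = n ^ 2 * Δ ^ 6 := by rw [hθdef]; ring
    have h28 : n * θ * K Dn Rn ≤ (Real.exp (2 * L) * Real.exp (6 * M)) * Real.exp ((Rn : ℝ) * (3 * M)) := by
      rw [hnθ]
      have hA : n ^ 2 * Δ ^ 6 ≤ Real.exp (2 * L) * Real.exp (6 * M) := by
        rw [← hn2exp]
        exact mul_le_mul_of_nonneg_left hΔ6exp (by positivity)
      have hB : K Dn Rn ≤ Real.exp ((Rn : ℝ) * (3 * M)) := by
        rw [← hKexp]; exact hKD
      have hApos : (0 : ℝ) ≤ n ^ 2 * Δ ^ 6 := by positivity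
      calc n ^ 2 * Δ ^ 6 * K Dn Rn ≤ n ^ 2 * Δ ^ 6 * Real.exp ((Rn : ℝ) * (3 * M)) :=
            mul_le_mul_of_nonneg_left hB hApos
        _ ≤ (Real.exp (2 * L) * Real.exp (6 * M)) * Real.exp ((Rn : ℝ) * (3 * M)) :=
            mul_le_mul_of_nonneg_right hA (Real.exp_pos _).le
    have h29 : (Real.exp (2 * L) * Real.exp (6 * M)) * Real.exp ((Rn : ℝ) * (3 * M))
        = Real.exp (2 * L + 6 * M + (Rn : ℝ) * (3 * M)) := by
      rw [← Real.exp_add, ← Real.exp_add]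
    have h30 : (Rn : ℝ) * (3 * M) ≤ 0.3 * L + 3 * M := by
      have h31 : (Rn : ℝ) * (3 * M) ≤ (10 * Δ * M + 1) * (3 * M) :=
        mul_le_mul_of_nonneg_right hRle (by positivity)
      have h32 : 30 * (Δ * M ^ 2) = 0.3 * L := by linarith only [hΔeq]
      linarith only [h31, h32]
    have h33 : 2 * L + 6 * M + (Rn : ℝ) * (3 * M) ≤ L * 2.9 := by
      have h35 : 9 * M ≤ 0.6 * L := by linarith only [hLM]
      linarith only [h30, h35]
    have h34 : n ^ (2.9 : ℝ) = Real.exp (L * 2.9) := by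
      rw [Real.rpow_def_of_pos hn0, hLdef]
    rw [h34]
    calc n * θ * K Dn Rn ≤ Real.exp (2 * L + 6 * M + (Rn : ℝ) * (3 * M)) := by
          rw [← h29]; exact h28
      _ ≤ Real.exp (L * 2.9) := Real.exp_le_exp.mpr h33
  exact le_trans hmain (add_le_add hpart1 hpart2)
end
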